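/- arXiv:1509.01342 — 3 statements merged into one kernel-verified Lean document; each statement's English description precedes it below -/
import Mathlib

section
/- Let ε be a skew-symmetric integer matrix indexed by a finite set I and fix k ∈ I. The X-coordinate mutation μ_k* defined on nonzero rational functions by (μ_k* X)_k = X_k⁻¹ and (μ_k* X)_i = X_i·(1 + X_k^{-sgn(ε_{ik})})^{-ε_{ik}} for i ≠ k is an involution: applying the mutation in direction k for ε and then for μ_k(ε) gives the identity map on the torus (ℂ*)^I wherever defined. -/
open Finset

variable {I : Type*} [Fintype I] [DecidableEq I]

/-- Seed mutation of a skew-symmetric exchange matrix in direction `k`. -/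
def mutate (ε : I → I → ℤ) (k : I) : I → I → ℤ :=
  fun i j => if i = k ∨ j = k then -ε i j
    else ε i j + (|ε i k| * ε k j + ε i k * |ε k j|) / 2

/-- The cluster Poisson (X-coordinate) mutation in direction `k`. -/
noncomputable def Xmut (ε : I → I → ℤ) (k : I) (X : I → ℂ) : I → ℂ :=
  fun i => if i = k then (X k)⁻¹
    else X i * (1 + X k ^ (-(ε i k).sign)) ^ (-(ε i k))

/-- `∏_{j : ε_{kj} > 0} A_j ^ {ε_{kj}}`. -/
noncomputable def plusProd (ε : I → I → ℤ) (k : I) (A : I → ℂ) : ℂ :=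
  ∏ j ∈ univ.filter fun j => 0 < ε k j, A j ^ ε k j

/-- `∏_{j : ε_{kj} < 0} A_j ^ {-ε_{kj}}`. -/
noncomputable def minusProd (ε : I → I → ℤ) (k : I) (A : I → ℂ) : ℂ :=
  ∏ j ∈ univ.filter fun j => ε k j < 0, A j ^ (-ε k j)

/-- The cluster K₂ (A-coordinate) mutation in direction `k`. -/
noncomputable def Amut (ε : I → I → ℤ) (k : I) (A : I → ℂ) : I → ℂ :=
  fun i => if i = k then (A k)⁻¹ * (plusProd ε k A + minusProd ε k A) else A i

/-- The monomial map `p : A ↦ (∏_j A_j^{ε_{ij}})_i`. -/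
noncomputable def pmap (ε : I → I → ℤ) (A : I → ℂ) : I → ℂ :=
  fun i => ∏ j, A j ^ ε i j

/-- The symplectic double (D-coordinate) mutation in direction `k`, acting on
pairs `(B, X)`. -/
noncomputable def Dmut (ε : I → I → ℤ) (k : I) (BX : (I → ℂ) × (I → ℂ)) :
    (I → ℂ) × (I → ℂ) :=
  ⟨fun i => if i = k then
      (BX.2 k * plusProd ε k BX.1 + minusProd ε k BX.1) / ((1 + BX.2 k) * BX.1 k)
    else BX.1 i,
    Xmut ε k BX.2⟩

/-- The map `φ : (A, A°) ↦ (B, X)` with `B_i = A°_i / A_i`, `X_i = ∏_j A_j^{ε_{ij}}`. -/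
noncomputable def phimap (ε : I → I → ℤ) (AA : (I → ℂ) × (I → ℂ)) :
    (I → ℂ) × (I → ℂ) :=
  ⟨fun i => AA.2 i / AA.1 i, pmap ε AA.1⟩

/-- The map `π : (B, X) ↦ (X, (X_i ∏_j B_j^{ε_{ij}})_i)`. -/
noncomputable def pimap (ε : I → I → ℤ) (BX : (I → ℂ) × (I → ℂ)) :
    (I → ℂ) × (I → ℂ) :=
  ⟨BX.2, fun i => BX.2 i * ∏ j, BX.1 j ^ ε i j⟩

/-- The involution `ι : (B, X) ↦ (B⁻¹, (X_i ∏_j B_j^{ε_{ij}})_i)`. -/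
noncomputable def iota (ε : I → I → ℤ) (BX : (I → ℂ) × (I → ℂ)) :
    (I → ℂ) × (I → ℂ) :=
  ⟨fun i => (BX.1 i)⁻¹, fun i => BX.2 i * ∏ j, BX.1 j ^ ε i j⟩

/-- the X-coordinate mutation is an involution: mutating in
direction `k` with matrix `ε` and then with `μ_k ε` is the identity wherever
defined. -/
theorem stmt8 {I : Type*} [Fintype I] [DecidableEq I]
    (ε : I → I → ℤ) (hskew : ∀ i j, ε i j = -ε j i) (k : I)
    (X : I → ℂ) (hX : ∀ i, X i ≠ 0)
    (h1 : 1 + X k ≠ 0) (h2 : 1 + (X k)⁻¹ ≠ 0) :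
    Xmut (mutate ε k) k (Xmut ε k X) = X := by
  funext i
  by_cases hi : i = k
  · subst hi
    simp [Xmut]
  · have hm : mutate ε k i k = -ε i k := by simp [mutate]
    simp only [Xmut, hi, if_false, hm, if_true, neg_neg, Int.sign_neg]
    set e := ε i k with he
    rcases lt_trichotomy e 0 with h | h | h
    · have hs : e.sign = -1 := Int.sign_eq_neg_one_of_neg h
      rw [hs]
      simp only [neg_neg, zpow_neg, zpow_one, inv_inv]
      rw [mul_assoc, ← zpow_neg, ← zpow_add₀ h1, neg_add_cancel, zpow_zero, mul_one]
    · rw [h]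
      norm_num
    · have hs : e.sign = 1 := Int.sign_eq_one_of_pos h
      rw [hs]
      simp only [neg_neg, zpow_neg, zpow_one]
      rw [mul_assoc, ← zpow_neg, ← zpow_add₀ h2, neg_add_cancel, zpow_zero, mul_one]
end

section
/- Let ε be a skew-symmetric integer matrix indexed by finite set I, and fix k ∈ I. Define the map p : (ℂ*)^I → (ℂ*)^I by p(A)_i = ∏_{j∈I} A_j^{ε_{ij}}. Then p intertwines the A-mutation and X-mutation in direction k: for all points A where both sides are defined, μ_k^X(p(A)) = p(μ_k^A(A)), where μ_k^A is the A-coordinate mutation, μ_k^X is the X-coordinate mutation, and the map p on the right-hand side is defined using the mutated matrix μ_k(ε). -/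
open Finset

variable {I : Type*} [Fintype I] [DecidableEq I]

lemma plusProd_eq (ε : I → I → ℤ) (k : I) (A : I → ℂ) :
    plusProd ε k A = ∏ j, A j ^ max (ε k j) 0 := by
  rw [plusProd, Finset.prod_filter]
  refine Finset.prod_congr rfl fun j _ => ?_
  split
  · rw [max_eq_left (le_of_lt ‹_›)]
  · rw [max_eq_right (by omega), zpow_zero]

lemma minusProd_eq (ε : I → I → ℤ) (k : I) (A : I → ℂ) :
    minusProd ε k A = ∏ j, A j ^ max (-ε k j) 0 := by
  rw [minusProd, Finset.prod_filter]
  refine Finset.prod_congr rfl fun j _ => ?_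
  split
  · rw [max_eq_left (by omega)]
  · rw [max_eq_right (by omega), zpow_zero]

lemma pmap_k (ε : I → I → ℤ) (k : I) (A : I → ℂ) (hA : ∀ i, A i ≠ 0) :
    pmap ε A k = plusProd ε k A * (minusProd ε k A)⁻¹ := by
  rw [plusProd_eq, minusProd_eq, ← Finset.prod_inv_distrib, ← Finset.prod_mul_distrib]
  refine Finset.prod_congr rfl fun j _ => ?_
  rw [← zpow_neg, ← zpow_add₀ (hA j)]
  congr 1
  omega

lemma key_neg (x P Q a : ℂ) (hP : P ≠ 0) (hQ : Q ≠ 0) (hPQ : P + Q ≠ 0) (ha : a ≠ 0) (c : ℤ) :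
    x * (1 + P * Q⁻¹) ^ (-c) = (a⁻¹ * (P + Q)) ^ (-c) * ((a ^ c)⁻¹ * x * Q ^ c) := by
  have h1 : 1 + P * Q⁻¹ = (P + Q) * Q⁻¹ := by field_simp; ring
  have h2 : a ^ c ≠ 0 := zpow_ne_zero _ ha
  have h3 : (P + Q) ^ c ≠ 0 := zpow_ne_zero _ hPQ
  rw [h1, mul_zpow, mul_zpow, inv_zpow, inv_zpow]
  simp only [zpow_neg, inv_inv]
  field_simp

lemma key_pos (x P Q a : ℂ) (hP : P ≠ 0) (hQ : Q ≠ 0) (hPQ : P + Q ≠ 0) (ha : a ≠ 0) (c : ℤ) :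
    x * (1 + (P * Q⁻¹) ^ (-1 : ℤ)) ^ (-c) = (a⁻¹ * (P + Q)) ^ (-c) * ((a ^ c)⁻¹ * x * P ^ c) := by
  have h0 : (P * Q⁻¹) ^ (-1 : ℤ) = Q * P⁻¹ := by
    rw [zpow_neg_one, mul_inv, inv_inv, mul_comm]
  rw [h0]
  calc x * (1 + Q * P⁻¹) ^ (-c)
      = (a⁻¹ * (Q + P)) ^ (-c) * ((a ^ c)⁻¹ * x * P ^ c) :=
        key_neg x Q P a hQ hP (by rwa [add_comm] at hPQ) ha c
    _ = (a⁻¹ * (P + Q)) ^ (-c) * ((a ^ c)⁻¹ * x * P ^ c) := by rw [add_comm Q P]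

/-- the monomial map `p` intertwines A-mutation and X-mutation in
direction `k`, the target `p` being taken for the mutated matrix. -/
theorem stmt10 {I : Type*} [Fintype I] [DecidableEq I]
    (ε : I → I → ℤ) (hskew : ∀ i j, ε i j = -ε j i) (k : I)
    (A : I → ℂ) (hA : ∀ i, A i ≠ 0)
    (hsum : plusProd ε k A + minusProd ε k A ≠ 0) :
    Xmut ε k (pmap ε A) = pmap (mutate ε k) (Amut ε k A) := by
  have hεkk : ε k k = 0 := by have := hskew k k; omega
  have hP : plusProd ε k A ≠ 0 := by
    rw [plusProd_eq]
    exact Finset.prod_ne_zero_iff.mpr fun j _ => zpow_ne_zero _ (hA j)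
  have hQ : minusProd ε k A ≠ 0 := by
    rw [minusProd_eq]
    exact Finset.prod_ne_zero_iff.mpr fun j _ => zpow_ne_zero _ (hA j)
  funext i
  by_cases hi : i = k
  · subst hi
    have h1 : Xmut ε i (pmap ε A) i = (pmap ε A i)⁻¹ := by simp [Xmut]
    rw [h1]
    show (pmap ε A i)⁻¹ = ∏ j, Amut ε i A j ^ mutate ε i i j
    rw [pmap, ← Finset.prod_inv_distrib]
    refine Finset.prod_congr rfl fun j _ => ?_
    by_cases hj : j = i
    · subst hj
      simp [Amut, mutate, hεkk]
    · simp [Amut, mutate, hj, zpow_neg]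
  · have hXL : Xmut ε k (pmap ε A) i
        = pmap ε A i * (1 + pmap ε A k ^ (-(ε i k).sign)) ^ (-ε i k) := by
      simp [Xmut, hi]
    have hak : A k ^ ε i k ≠ 0 := zpow_ne_zero _ (hA k)
    have hR : pmap (mutate ε k) (Amut ε k A) i
        = ((A k)⁻¹ * (plusProd ε k A + minusProd ε k A)) ^ (-ε i k)
          * ((A k ^ ε i k)⁻¹ * pmap ε A i
            * ∏ j, A j ^ ((|ε i k| * ε k j + ε i k * |ε k j|) / 2)) := by
      have e1 : pmap (mutate ε k) (Amut ε k A) i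
          = Amut ε k A k ^ mutate ε k i k
            * ∏ j ∈ univ.erase k, Amut ε k A j ^ mutate ε k i j :=
        (Finset.mul_prod_erase univ (fun j => Amut ε k A j ^ mutate ε k i j)
          (Finset.mem_univ k)).symm
      rw [e1]
      have e2 : Amut ε k A k ^ mutate ε k i k
          = ((A k)⁻¹ * (plusProd ε k A + minusProd ε k A)) ^ (-ε i k) := by
        simp [Amut, mutate]
      have e3 : ∏ j ∈ univ.erase k, Amut ε k A j ^ mutate ε k i j
          = (∏ j ∈ univ.erase k, A j ^ ε i j)
            * ∏ j ∈ univ.erase k, A j ^ ((|ε i k| * ε k j + ε i k * |ε k j|) / 2) := by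
        rw [← Finset.prod_mul_distrib]
        refine Finset.prod_congr rfl fun j hj => ?_
        have hjk : j ≠ k := Finset.ne_of_mem_erase hj
        simp only [Amut, mutate, if_neg hjk, if_neg (show ¬(i = k ∨ j = k) by tauto)]
        rw [← zpow_add₀ (hA j)]
      have e4 : ∏ j ∈ univ.erase k, A j ^ ε i j = (A k ^ ε i k)⁻¹ * pmap ε A i := by
        have h := Finset.mul_prod_erase univ (fun j => A j ^ ε i j) (Finset.mem_univ k)
        calc ∏ j ∈ univ.erase k, A j ^ ε i j
            = (A k ^ ε i k)⁻¹ * (A k ^ ε i k * ∏ j ∈ univ.erase k, A j ^ ε i j) := by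
              rw [← mul_assoc, inv_mul_cancel₀ hak, one_mul]
          _ = (A k ^ ε i k)⁻¹ * pmap ε A i := by rw [h]; rfl
      have e5 : ∏ j ∈ univ.erase k, A j ^ ((|ε i k| * ε k j + ε i k * |ε k j|) / 2)
          = ∏ j, A j ^ ((|ε i k| * ε k j + ε i k * |ε k j|) / 2) := by
        rw [← Finset.mul_prod_erase univ
          (fun j => A j ^ ((|ε i k| * ε k j + ε i k * |ε k j|) / 2)) (Finset.mem_univ k)]
        simp [hεkk]
      rw [e2, e3, e4, e5, mul_assoc]
    rw [hXL, hR]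
    rcases lt_trichotomy (ε i k) 0 with hc | hc | hc
    · have hs : (ε i k).sign = -1 := Int.sign_eq_neg_one_iff_neg.mpr hc
      have hD : ∏ j, A j ^ ((|ε i k| * ε k j + ε i k * |ε k j|) / 2)
          = minusProd ε k A ^ ε i k := by
        rw [minusProd_eq, ← Finset.prod_zpow]
        refine Finset.prod_congr rfl fun j _ => ?_
        rw [← zpow_mul]
        congr 1
        rcases le_or_gt 0 (ε k j) with hb | hb
        · rw [abs_of_neg hc, abs_of_nonneg hb, max_eq_right (by omega : -ε k j ≤ 0)]
          have h0 : -ε i k * ε k j + ε i k * ε k j = 0 := by ring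
          rw [h0]
          simp
        · rw [abs_of_neg hc, abs_of_neg hb, max_eq_left (by omega : (0:ℤ) ≤ -ε k j)]
          have h0 : -ε i k * ε k j + ε i k * -ε k j = 2 * (-ε k j * ε i k) := by ring
          rw [h0]
          exact Int.mul_ediv_cancel_left _ two_ne_zero
      rw [hD, hs, pmap_k ε k A hA, neg_neg, zpow_one]
      exact key_neg _ _ _ _ hP hQ hsum (hA k) _
    · simp [hc]
    · have hs : (ε i k).sign = 1 := Int.sign_eq_one_iff_pos.mpr hc
      have hD : ∏ j, A j ^ ((|ε i k| * ε k j + ε i k * |ε k j|) / 2)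
          = plusProd ε k A ^ ε i k := by
        rw [plusProd_eq, ← Finset.prod_zpow]
        refine Finset.prod_congr rfl fun j _ => ?_
        rw [← zpow_mul]
        congr 1
        rcases le_or_gt 0 (ε k j) with hb | hb
        · rw [abs_of_pos hc, abs_of_nonneg hb, max_eq_left hb]
          have h0 : ε i k * ε k j + ε i k * ε k j = 2 * (ε k j * ε i k) := by ring
          rw [h0]
          exact Int.mul_ediv_cancel_left _ two_ne_zero
        · rw [abs_of_pos hc, abs_of_neg hb, max_eq_right (le_of_lt hb)]
          have h0 : ε i k * ε k j + ε i k * -ε k j = 0 := by ring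
          rw [h0]
          simp
      rw [hD, hs, pmap_k ε k A hA]
      exact key_pos _ _ _ _ hP hQ hsum (hA k) _
end

section
/- Let ε be a skew-symmetric integer matrix indexed by finite set J and fix k ∈ J. The map π : (ℂ*)^{2|J|} → (ℂ*)^{|J|} × (ℂ*)^{|J|} from the D-torus with coordinates (B_i, X_i) given by (X_i ⊗ 1) = X_i and (1 ⊗ X_i) = X_i·∏_{j∈J} B_j^{ε_{ij}} intertwines the D-mutation μ_k^D with the product μ_k^X × μ_k^X of X-mutations, wherever defined. -/
open Finset

variable {I : Type*} [Fintype I] [DecidableEq I]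

lemma plusProd_ne_zero (ε : I → I → ℤ) (k : I) (B : I → ℂ) (hB : ∀ i, B i ≠ 0) :
    plusProd ε k B ≠ 0 :=
  Finset.prod_ne_zero_iff.2 fun j _ => zpow_ne_zero _ (hB j)

lemma minusProd_ne_zero (ε : I → I → ℤ) (k : I) (B : I → ℂ) (hB : ∀ i, B i ≠ 0) :
    minusProd ε k B ≠ 0 :=
  Finset.prod_ne_zero_iff.2 fun j _ => zpow_ne_zero _ (hB j)

lemma prod_zpow_split (ε : I → I → ℤ) (k : I) (B : I → ℂ) :
    ∏ j, B j ^ ε k j = plusProd ε k B * (minusProd ε k B)⁻¹ := by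
  rw [plusProd, minusProd, Finset.prod_filter, Finset.prod_filter,
    ← Finset.prod_inv_distrib, ← Finset.prod_mul_distrib]
  refine Finset.prod_congr rfl fun j _ => ?_
  rcases lt_trichotomy (ε k j) 0 with h | h | h
  · rw [if_neg (by omega), if_pos h, one_mul, zpow_neg, inv_inv]
  · simp [h]
  · rw [if_pos h, if_neg (by omega), inv_one, mul_one]

lemma prod_if_eq (b : ℂ) (B : I → ℂ) (e : I → ℤ) (k : I) :
    ∏ j, (if j = k then b else B j) ^ e j
      = b ^ e k * ∏ j ∈ univ.erase k, B j ^ e j := by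
  rw [← Finset.mul_prod_erase univ (fun j => (if j = k then b else B j) ^ e j) (mem_univ k)]
  rw [if_pos rfl]
  congr 1
  refine Finset.prod_congr rfl fun j hj => ?_
  rw [if_neg (Finset.ne_of_mem_erase hj)]

lemma erase_prod_eq (B : I → ℂ) (e : I → ℤ) (k : I) (h : e k = 0) :
    ∏ j ∈ univ.erase k, B j ^ e j = ∏ j, B j ^ e j := by
  rw [← Finset.mul_prod_erase univ (fun j => B j ^ e j) (mem_univ k), h, zpow_zero, one_mul]

lemma delta_prod_pos (ε : I → I → ℤ) (i k : I) (B : I → ℂ) (hkk : ε k k = 0)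
    (ha : 0 < ε i k) :
    ∏ j ∈ univ.erase k, B j ^ ((|ε i k| * ε k j + ε i k * |ε k j|) / 2)
      = plusProd ε k B ^ ε i k := by
  have key : ∀ j, (|ε i k| * ε k j + ε i k * |ε k j|) / 2
      = if 0 < ε k j then ε k j * ε i k else 0 := by
    intro j
    rcases lt_trichotomy (ε k j) 0 with h | h | h
    · rw [abs_of_pos ha, abs_of_neg h, if_neg (by omega)]
      have : ε i k * ε k j + ε i k * -ε k j = 0 := by ring
      rw [this, Int.zero_ediv]
    · simp [h]
    · rw [abs_of_pos ha, abs_of_pos h, if_pos h]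
      have : ε i k * ε k j + ε i k * ε k j = 2 * (ε k j * ε i k) := by ring
      rw [this, Int.mul_ediv_cancel_left _ two_ne_zero]
  have hfil : (univ.erase k).filter (fun j => 0 < ε k j)
      = univ.filter (fun j => 0 < ε k j) := by
    ext j
    simp only [Finset.mem_filter, Finset.mem_erase, Finset.mem_univ, true_and, and_true]
    constructor
    · exact fun h => h.2
    · exact fun h => ⟨fun hj => by subst hj; omega, h⟩
  calc ∏ j ∈ univ.erase k, B j ^ ((|ε i k| * ε k j + ε i k * |ε k j|) / 2)
      = ∏ j ∈ univ.erase k, (if 0 < ε k j then B j ^ (ε k j * ε i k) else 1) := by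
        refine Finset.prod_congr rfl fun j _ => ?_
        rw [key j]
        split_ifs <;> simp
    _ = ∏ j ∈ (univ.erase k).filter (fun j => 0 < ε k j), B j ^ (ε k j * ε i k) :=
        (Finset.prod_filter _ _).symm
    _ = ∏ j ∈ univ.filter (fun j => 0 < ε k j), B j ^ (ε k j * ε i k) := by rw [hfil]
    _ = ∏ j ∈ univ.filter (fun j => 0 < ε k j), (B j ^ ε k j) ^ ε i k :=
        Finset.prod_congr rfl fun j _ => zpow_mul _ _ _
    _ = plusProd ε k B ^ ε i k := Finset.prod_zpow _ _ _

lemma delta_prod_neg (ε : I → I → ℤ) (i k : I) (B : I → ℂ) (hkk : ε k k = 0)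
    (ha : ε i k < 0) :
    ∏ j ∈ univ.erase k, B j ^ ((|ε i k| * ε k j + ε i k * |ε k j|) / 2)
      = minusProd ε k B ^ ε i k := by
  have key : ∀ j, (|ε i k| * ε k j + ε i k * |ε k j|) / 2
      = if ε k j < 0 then -ε k j * ε i k else 0 := by
    intro j
    rcases lt_trichotomy (ε k j) 0 with h | h | h
    · rw [abs_of_neg ha, abs_of_neg h, if_pos h]
      have : -ε i k * ε k j + ε i k * -ε k j = 2 * (-ε k j * ε i k) := by ring
      rw [this, Int.mul_ediv_cancel_left _ two_ne_zero]
    · simp [h]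
    · rw [abs_of_neg ha, abs_of_pos h, if_neg (by omega)]
      have : -ε i k * ε k j + ε i k * ε k j = 0 := by ring
      rw [this, Int.zero_ediv]
  have hfil : (univ.erase k).filter (fun j => ε k j < 0)
      = univ.filter (fun j => ε k j < 0) := by
    ext j
    simp only [Finset.mem_filter, Finset.mem_erase, Finset.mem_univ, true_and, and_true]
    constructor
    · exact fun h => h.2
    · exact fun h => ⟨fun hj => by subst hj; omega, h⟩
  calc ∏ j ∈ univ.erase k, B j ^ ((|ε i k| * ε k j + ε i k * |ε k j|) / 2)
      = ∏ j ∈ univ.erase k, (if ε k j < 0 then B j ^ (-ε k j * ε i k) else 1) := by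
        refine Finset.prod_congr rfl fun j _ => ?_
        rw [key j]
        split_ifs <;> simp
    _ = ∏ j ∈ (univ.erase k).filter (fun j => ε k j < 0), B j ^ (-ε k j * ε i k) :=
        (Finset.prod_filter _ _).symm
    _ = ∏ j ∈ univ.filter (fun j => ε k j < 0), B j ^ (-ε k j * ε i k) := by rw [hfil]
    _ = ∏ j ∈ univ.filter (fun j => ε k j < 0), (B j ^ (-ε k j)) ^ ε i k :=
        Finset.prod_congr rfl fun j _ => zpow_mul _ _ _
    _ = minusProd ε k B ^ ε i k := Finset.prod_zpow _ _ _


/-- the map `π` intertwines the D-mutation with the product of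
two X-mutations, target coordinates using the mutated matrix. -/
theorem stmt12 {I : Type*} [Fintype I] [DecidableEq I]
    (ε : I → I → ℤ) (hskew : ∀ i j, ε i j = -ε j i) (k : I)
    (B X : I → ℂ) (hB : ∀ i, B i ≠ 0) (hX : ∀ i, X i ≠ 0)
    (h1 : 1 + X k ≠ 0)
    (h2 : 1 + X k * ∏ j, B j ^ ε k j ≠ 0) :
    pimap (mutate ε k) (Dmut ε k (B, X))
      = (Xmut ε k X, Xmut ε k (fun i => X i * ∏ j, B j ^ ε i j)) := by
  have hkk : ε k k = 0 := by have := hskew k k; omega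
  simp only [pimap, Dmut, Prod.mk.injEq]
  set P := plusProd ε k B with hPdef
  set M := minusProd ε k B with hMdef
  have hP : P ≠ 0 := plusProd_ne_zero ε k B hB
  have hM : M ≠ 0 := minusProd_ne_zero ε k B hB
  have hQ : ∏ j, B j ^ ε k j = P * M⁻¹ := prod_zpow_split ε k B
  have h2' : 1 + X k * (P * M⁻¹) ≠ 0 := by rw [← hQ]; exact h2
  have hden : X k * P + M ≠ 0 := by
    intro h
    apply h2'
    field_simp
    linear_combination h
  refine ⟨trivial, funext fun i => ?_⟩
  by_cases hik : i = k
  · subst hik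
    simp only [Xmut, if_pos rfl]
    rw [prod_if_eq, show mutate ε i i i = 0 by simp [mutate, hkk]]
    rw [zpow_zero, one_mul]
    have hcongr : ∀ j ∈ univ.erase i, B j ^ mutate ε i i j = (B j ^ ε i j)⁻¹ := by
      intro j hj
      rw [show mutate ε i i j = -ε i j by simp [mutate], zpow_neg]
    rw [Finset.prod_congr rfl hcongr, Finset.prod_inv_distrib,
      erase_prod_eq B (fun j => ε i j) i hkk, mul_inv]
    simp
  · simp only [Xmut, if_neg hik]
    rw [prod_if_eq, show mutate ε k i k = -ε i k by simp [mutate]]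
    have hcongr : ∀ j ∈ univ.erase k, B j ^ mutate ε k i j
        = B j ^ ε i j * B j ^ ((|ε i k| * ε k j + ε i k * |ε k j|) / 2) := by
      intro j hj
      rw [show mutate ε k i j = ε i j + (|ε i k| * ε k j + ε i k * |ε k j|) / 2 by
        simp [mutate, hik, Finset.ne_of_mem_erase hj], zpow_add₀ (hB j)]
    rw [Finset.prod_congr rfl hcongr, Finset.prod_mul_distrib]
    set R := ∏ j ∈ univ.erase k, B j ^ ε i j with hRdef
    have hR : R ≠ 0 := Finset.prod_ne_zero_iff.2 fun j _ => zpow_ne_zero _ (hB j)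
    have hfull : ∏ j, B j ^ ε i j = B k ^ ε i k * R :=
      (Finset.mul_prod_erase univ (fun j => B j ^ ε i j) (mem_univ k)).symm
    rw [hQ, hfull]
    rcases lt_trichotomy (ε i k) 0 with ha | ha | ha
    · -- negative case
      rw [delta_prod_neg ε i k B hkk ha]
      rw [show (ε i k).sign = -1 from Int.sign_eq_neg_one_iff_neg.mpr ha]
      have h1' : X k + 1 ≠ 0 := by rw [add_comm] at h1; exact h1
      have base : ((1 + X k)⁻¹ * ((X k * P + M) / ((1 + X k) * B k))⁻¹) * M
          = B k * (1 + X k * (P * M⁻¹))⁻¹ := by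
        have e2 : (1 : ℂ) + X k * (P * M⁻¹) = (X k * P + M) / M := by
          field_simp
          ring
        rw [e2]
        field_simp
      have hpow := congrArg (· ^ (ε i k)) base
      simp only [mul_zpow, inv_zpow, ← zpow_neg] at hpow
      simp only [neg_neg, zpow_one]
      set t1 := (1 + X k) ^ (-ε i k) with ht1
      set t2 := ((X k * P + M) / ((1 + X k) * B k)) ^ (-ε i k) with ht2
      set t3 := M ^ ε i k with ht3
      set t4 := B k ^ ε i k with ht4
      set t5 := (1 + X k * (P * M⁻¹)) ^ (-ε i k) with ht5
      linear_combination (X i * R) * hpow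
    · -- zero case
      simp [ha, Int.zero_ediv]
    · -- positive case
      rw [delta_prod_pos ε i k B hkk ha]
      rw [show (ε i k).sign = 1 from Int.sign_eq_one_iff_pos.mpr ha]
      have h1' : X k + 1 ≠ 0 := by rw [add_comm] at h1; exact h1
      have hXk := hX k
      have hBk := hB k
      have base : ((1 + (X k)⁻¹)⁻¹ * ((X k * P + M) / ((1 + X k) * B k))⁻¹) * P
          = B k * (1 + (X k * (P * M⁻¹))⁻¹)⁻¹ := by
        have e2 : (1 : ℂ) + (X k * (P * M⁻¹))⁻¹ = (X k * P + M) / (X k * P) := by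
          rw [eq_div_iff (mul_ne_zero (hX k) hP)]
          field_simp
        have e1 : (1 : ℂ) + (X k)⁻¹ = (X k + 1) / X k := by
          rw [add_div, div_self (hX k), one_div]
        rw [e1, e2]
        field_simp
        ring
      have hpow := congrArg (· ^ (ε i k)) base
      simp only [mul_zpow, inv_zpow, ← zpow_neg] at hpow
      simp only [zpow_neg, zpow_one] at *
      set t1 := ((1 + (X k)⁻¹) ^ ε i k)⁻¹ with ht1
      set t2 := (((X k * P + M) / ((1 + X k) * B k)) ^ ε i k)⁻¹ with ht2
      set t3 := P ^ ε i k with ht3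
      set t4 := B k ^ ε i k with ht4
      set t5 := ((1 + (X k * (P * M⁻¹))⁻¹) ^ ε i k)⁻¹ with ht5
      linear_combination (X i * R) * hpow
end
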